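/- arXiv:0901.3230 — 14 statements merged into one kernel-verified Lean document; each statement's English description precedes it below -/
import Mathlib

section
/- If Y is a locally connected topological space, V ⊆ Y is closed, and V' is a connected component of V, then ∂V' = V' ∩ ∂V. -/
/-!
A component `V'` of the closed set `V` is closed, so `∂V' = V' \ int V'`. By local connectedness,
the component of `int V` through a point of `V' ∩ int V` is an open subset of `V'`, hence
`int V' = V' ∩ int V`, and `∂V' = V' \ int V = V' ∩ ∂V` because `V' ⊆ V`.
-/

open Set

theorem IsClosed.connectedComponentIn {Y : Type*} [TopologicalSpace Y] {V : Set Y}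
    (hV : IsClosed V) (x : Y) : IsClosed (connectedComponentIn V x) := by
  by_cases hx : x ∈ V
  · rw [← closure_subset_iff_isClosed]
    exact (isConnected_connectedComponentIn_iff.mpr hx).isPreconnected.closure
      |>.subset_connectedComponentIn (subset_closure (mem_connectedComponentIn hx))
        (closure_minimal (connectedComponentIn_subset V x) hV)
  · rw [connectedComponentIn_eq_empty hx]
    exact isClosed_empty

theorem interior_connectedComponentIn {Y : Type*} [TopologicalSpace Y]
    [LocallyConnectedSpace Y] (V : Set Y) (x : Y) :
    interior (connectedComponentIn V x) = connectedComponentIn V x ∩ interior V := by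
  refine Subset.antisymm
    (subset_inter interior_subset (interior_mono (connectedComponentIn_subset V x))) ?_
  rintro y ⟨hyV', hyV⟩
  have hsub : connectedComponentIn (interior V) y ⊆ connectedComponentIn V x := by
    rw [connectedComponentIn_eq hyV']
    exact connectedComponentIn_mono y interior_subset
  exact interior_maximal hsub isOpen_interior.connectedComponentIn (mem_connectedComponentIn hyV)

theorem frontier_connectedComponentIn_of_closed_general
    {Y : Type*} [TopologicalSpace Y] [LocallyConnectedSpace Y]
    (V : Set Y) (hV : IsClosed V) (x : Y) :
    frontier (connectedComponentIn V x) = connectedComponentIn V x ∩ frontier V := by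
  rw [(hV.connectedComponentIn x).frontier_eq, hV.frontier_eq, interior_connectedComponentIn,
    sdiff_self_inter, ← inter_sdiff_assoc, inter_eq_left.mpr (connectedComponentIn_subset V x)]

theorem frontier_connectedComponentIn_of_closed
    {Y : Type*} [TopologicalSpace Y] [LocallyConnectedSpace Y]
    (V : Set Y) (hV : IsClosed V) (x : Y) (hx : x ∈ V) :
    frontier (connectedComponentIn V x) = connectedComponentIn V x ∩ frontier V :=
  frontier_connectedComponentIn_of_closed_general V hV x
end

section
/- If Y is a locally connected topological space and {A_i}_{i∈I} is any family of subsets of Y, then the boundary of the union ⋃_i A_i is contained in the closure of the union of the boundaries ⋃_i ∂A_i. -/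
/-! A connected open neighbourhood of a boundary point of `⋃ i, A i` meets some `A i` but cannot
lie inside it (else the point would be interior), so by connectedness it meets `frontier (A i)`. -/

open Set

theorem IsPreconnected.inter_frontier_nonempty {X : Type*} [TopologicalSpace X] {s t : Set X}
    (hs : IsPreconnected s) (hst : (s ∩ t).Nonempty) (hst' : (s \ t).Nonempty) :
    (s ∩ frontier t).Nonempty := by
  by_contra! hfr
  have hcover : s ⊆ interior t ∪ (closure t)ᶜ := fun x hx => by
    by_contra! hx'
    rw [mem_union, not_or, notMem_compl_iff] at hx'
    exact hfr.subset ⟨hx, hx'.2, hx'.1⟩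
  rcases hs.subset_or_subset isOpen_interior isClosed_closure.isOpen_compl
      (disjoint_compl_right_iff_subset.2 (interior_subset.trans subset_closure)) hcover with
    hint | hext
  · obtain ⟨x, hxs, hxt⟩ := hst'
    exact hxt (interior_subset (hint hxs))
  · obtain ⟨x, hxs, hxt⟩ := hst
    exact hext hxs (subset_closure hxt)

theorem IsPreconnected.inter_iUnion_frontier_nonempty {X ι : Type*} [TopologicalSpace X]
    {U : Set X} (hU : IsPreconnected U) (hUo : IsOpen U) {A : ι → Set X}
    (h : (U ∩ frontier (⋃ i, A i)).Nonempty) : (U ∩ ⋃ i, frontier (A i)).Nonempty := by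
  obtain ⟨x, hxU, hx_cl, hx_int⟩ := h
  obtain ⟨y, hyU, hyA⟩ := mem_closure_iff.1 hx_cl U hUo hxU
  obtain ⟨i, hyi⟩ := mem_iUnion.1 hyA
  have hUAi : (U \ A i).Nonempty := by
    by_contra! hUsub
    exact hx_int (interior_maximal ((sdiff_eq_empty.1 hUsub).trans (subset_iUnion A i)) hUo hxU)
  obtain ⟨z, hzU, hzfr⟩ := hU.inter_frontier_nonempty ⟨y, hyU, hyi⟩ hUAi
  exact ⟨z, hzU, mem_iUnion.2 ⟨i, hzfr⟩⟩

theorem frontier_iUnion_subset_closure_iUnion_frontier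
    {Y : Type*} [TopologicalSpace Y] [LocallyConnectedSpace Y]
    {I : Type*} (A : I → Set Y) :
    frontier (⋃ i, A i) ⊆ closure (⋃ i, frontier (A i)) := by
  intro x hx
  rw [mem_closure_iff_nhds_basis' (LocallyConnectedSpace.open_connected_basis x)]
  rintro U ⟨hUo, hxU, hUconn⟩
  exact hUconn.isPreconnected.inter_iUnion_frontier_nonempty hUo ⟨x, hxU, hx⟩
end

section
/- Let Y be a connected, locally connected topological space, let A ⊆ Y be an open subset such that Y \ A is connected, and let A' be a connected component of A. Then Y \ A' is connected. -/
/-! Each component `C` of the open set `A` is open, so if its closure missed `Aᶜ` it would be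
clopen in the connected space `Y`. Hence `closure C` meets `Aᶜ`, and `Aᶜ ∪ C` is connected.
The complement of `A'` is the union of `Aᶜ` with the components `C ≠ A'`, i.e. of connected sets
that all contain the nonempty set `Aᶜ`. -/

open Set

section

variable {X : Type*} [TopologicalSpace X]

theorem IsPreconnected.union_of_closure_inter_nonempty {s t : Set X} (hs : IsPreconnected s)
    (ht : IsPreconnected t) (hst : (closure s ∩ t).Nonempty) : IsPreconnected (s ∪ t) := by
  obtain ⟨p, hps, hpt⟩ := hst
  have hsp : IsPreconnected (s ∪ {p}) :=
    hs.subset_closure subset_union_left (union_subset subset_closure (singleton_subset_iff.2 hps))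
  have := IsPreconnected.union p (mem_union_right s (mem_singleton p)) hpt hsp ht
  rwa [union_assoc, singleton_union, insert_eq_of_mem hpt] at this

theorem disjoint_connectedComponentIn_of_notMem {F : Set X} {x y : X}
    (hy : y ∉ connectedComponentIn F x) :
    Disjoint (connectedComponentIn F y) (connectedComponentIn F x) := by
  refine disjoint_left.2 fun z hzy hzx => hy ?_
  have hyF : y ∈ F := connectedComponentIn_nonempty_iff.1 ⟨z, hzy⟩
  rw [connectedComponentIn_eq hzx, ← connectedComponentIn_eq hzy]
  exact mem_connectedComponentIn hyF

variable [PreconnectedSpace X] [LocallyConnectedSpace X]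

theorem IsOpen.closure_connectedComponentIn_inter_compl_nonempty {A : Set X} (hA : IsOpen A)
    (hAc : Aᶜ.Nonempty) {y : X} (hy : y ∈ A) :
    (closure (connectedComponentIn A y) ∩ Aᶜ).Nonempty := by
  set C := connectedComponentIn A y
  by_contra h
  rw [not_nonempty_iff_eq_empty, ← disjoint_iff_inter_eq_empty,
    disjoint_compl_right_iff_subset] at h
  have hCclosed : IsClosed C := closure_subset_iff_isClosed.1 <|
    isPreconnected_connectedComponentIn.closure.subset_connectedComponentIn
      (subset_closure (mem_connectedComponentIn hy)) h
  have hCuniv : C = univ := IsClopen.eq_univ ⟨hCclosed, hA.connectedComponentIn⟩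
    ⟨y, mem_connectedComponentIn hy⟩
  obtain ⟨z, hz⟩ := hAc
  exact hz (connectedComponentIn_subset A y (eq_univ_iff_forall.1 hCuniv z))

theorem IsOpen.isPreconnected_compl_union_connectedComponentIn {A : Set X} (hA : IsOpen A)
    (hAc : IsConnected Aᶜ) (y : X) : IsPreconnected (Aᶜ ∪ connectedComponentIn A y) := by
  by_cases hy : y ∈ A
  · rw [union_comm]
    exact isPreconnected_connectedComponentIn.union_of_closure_inter_nonempty
      hAc.isPreconnected (hA.closure_connectedComponentIn_inter_compl_nonempty hAc.nonempty hy)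
  · rw [connectedComponentIn_eq_empty hy, union_empty]
    exact hAc.isPreconnected

end

theorem compl_connectedComponentIn_connected_general
    {Y : Type*} [TopologicalSpace Y] [ConnectedSpace Y] [LocallyConnectedSpace Y]
    (A : Set Y) (hA : IsOpen A) (hcompl : IsConnected Aᶜ)
    (x : Y) :
    IsConnected (connectedComponentIn A x)ᶜ := by
  obtain ⟨x₀, hx₀⟩ := hcompl.nonempty
  have hAc_sub : Aᶜ ⊆ (connectedComponentIn A x)ᶜ :=
    compl_subset_compl.2 (connectedComponentIn_subset A x)
  refine ⟨⟨x₀, hAc_sub hx₀⟩, isPreconnected_of_forall x₀ fun y hy => ?_⟩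
  refine ⟨Aᶜ ∪ connectedComponentIn A y, ?_, Or.inl hx₀, ?_,
    hA.isPreconnected_compl_union_connectedComponentIn hcompl y⟩
  · exact union_subset hAc_sub
      (subset_compl_iff_disjoint_right.2 (disjoint_connectedComponentIn_of_notMem hy))
  · by_cases hyA : y ∈ A
    · exact Or.inr (mem_connectedComponentIn hyA)
    · exact Or.inl hyA

theorem compl_connectedComponentIn_connected
    {Y : Type*} [TopologicalSpace Y] [ConnectedSpace Y] [LocallyConnectedSpace Y]
    (A : Set Y) (hA : IsOpen A) (hcompl : IsConnected Aᶜ)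
    (x : Y) (hx : x ∈ A) :
    IsConnected (connectedComponentIn A x)ᶜ :=
  compl_connectedComponentIn_connected_general A hA hcompl x
end

section
/- Let X be a topological space, C ⊆ X closed, and f : C → X continuous with f(∂C) ⊆ C. Define C_0 = X, C_{n+1} = {x ∈ C : f(x) ∈ C_n}. Then for every n, f maps the boundary of C_{n+2} relative to C_{n+1} into the boundary of C_{n+1} relative to C_n. -/
/-! Since `C (n+1) = C ∩ f⁻¹' (C n)`, both relative boundaries are taken between sets of the form
`C ∩ f⁻¹' ·`, and a map continuous on `C` carries closure points of subsets of `C` to closure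
points of their images. -/

/-- The boundary of `A` relative to the subspace `Y` (for `A ⊆ Y`). -/
def relFrontier {X : Type*} [TopologicalSpace X] (Y A : Set X) : Set X :=
  Y ∩ closure A ∩ closure (Y \ A)

theorem ContinuousOn.image_relFrontier_inter_preimage_subset {X Y : Type*} [TopologicalSpace X]
    [TopologicalSpace Y] {f : X → Y} {s : Set X} (hf : ContinuousOn f s) (A B : Set Y) :
    f '' relFrontier (s ∩ f ⁻¹' A) (s ∩ f ⁻¹' B) ⊆ relFrontier A B := by
  rintro _ ⟨x, ⟨⟨⟨hxs, hxA⟩, hxB⟩, hxAB⟩, rfl⟩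
  have hcont := hf.continuousWithinAt hxs
  refine ⟨⟨hxA, ?_⟩, ?_⟩
  · refine closure_mono ?_ ((hcont.mono Set.inter_subset_left).mem_closure_image hxB)
    exact (Set.image_mono Set.inter_subset_right).trans (Set.image_preimage_subset f B)
  · refine closure_mono ?_ ((hcont.mono fun z hz => hz.1.1).mem_closure_image hxAB)
    rintro _ ⟨z, ⟨⟨hzs, hzA⟩, hzB⟩, rfl⟩
    exact ⟨hzA, fun hfzB => hzB ⟨hzs, hfzB⟩⟩

theorem dvt_f_maps_relFrontier_general
    {X : Type*} [TopologicalSpace X] (C : Set X) (f : X → X) (hf : ContinuousOn f C)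
    (Cn : ℕ → Set X)
    (hsucc : ∀ n, Cn (n + 1) = {x ∈ C | f x ∈ Cn n}) :
    ∀ n, f '' relFrontier (Cn (n + 1)) (Cn (n + 2)) ⊆
      relFrontier (Cn n) (Cn (n + 1)) := by
  have hpre : ∀ n, Cn (n + 1) = C ∩ f ⁻¹' Cn n := hsucc
  intro n
  rw [hpre (n + 1), hpre n]
  exact hf.image_relFrontier_inter_preimage_subset _ _

theorem dvt_f_maps_relFrontier
    {X : Type*} [TopologicalSpace X] (C : Set X) (hCne : C.Nonempty)
    (hC : IsClosed C) (f : X → X) (hf : ContinuousOn f C)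
    (hbdr : ∀ x ∈ frontier C, f x ∈ C)
    (Cn : ℕ → Set X) (h0 : Cn 0 = Set.univ)
    (hsucc : ∀ n, Cn (n + 1) = {x ∈ C | f x ∈ Cn n}) :
    ∀ n, f '' relFrontier (Cn (n + 1)) (Cn (n + 2)) ⊆
      relFrontier (Cn n) (Cn (n + 1)) :=
  dvt_f_maps_relFrontier_general C f hf Cn hsucc
end

section
/- Let X be a topological space, C ⊆ X closed, f : C → X continuous with f(∂C) ⊆ C, and C_n defined by C_0 = X, C_{n+1} = {x ∈ C : f(x) ∈ C_n}. Then for every n ∈ ℕ, the boundary of C_{n+1} relative to C_n is contained in C_{n+2}. -/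
/-!
`C_n` is the set of points whose first `n` iterates under `f` stay in `C`; for `n ≥ 1` it is
closed. The map `f` sends `C_{n+1}` into `C_n`, the part `C_{n+2}` into `C_{n+1}` and the rest
`C_{n+1} \ C_{n+2}` into `C_n \ C_{n+1}`; being continuous on `C`, it therefore maps the
boundary of `C_{n+2}` relative to `C_{n+1}` into that of `C_{n+1}` relative to `C_n`. This
reduces the claim for `n + 1` to the claim for `n`, and for `n = 0` the relative boundary is `∂C`.
-/

open Set

section RelFrontier

variable {X Y : Type*} [TopologicalSpace X] [TopologicalSpace Y]

theorem relFrontier_univ (A : Set X) : relFrontier univ A = frontier A := by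
  rw [relFrontier, frontier_eq_closure_inter_closure, univ_inter, ← compl_eq_univ_sdiff]

theorem ContinuousOn.mapsTo_relFrontier {f : X → Y} {S A : Set X} {T B : Set Y}
    (hf : ContinuousOn f S) (hAS : A ⊆ S) (hST : MapsTo f S T) (hAB : MapsTo f A B)
    (hdiff : MapsTo f (S \ A) (T \ B)) :
    MapsTo f (relFrontier S A) (relFrontier T B) := by
  rintro x ⟨⟨hxS, hxA⟩, hxSA⟩
  have hfx : ContinuousWithinAt f S x := hf x hxS
  exact ⟨⟨hST hxS, closure_mono hAB.image_subset ((hfx.mono hAS).mem_closure_image hxA)⟩,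
    closure_mono hdiff.image_subset ((hfx.mono sdiff_subset).mem_closure_image hxSA)⟩

end RelFrontier

section IterateDomain

variable {X : Type*} {C : Set X} {f : X → X}

def iterateDomain (C : Set X) (f : X → X) : ℕ → Set X
  | 0 => univ
  | n + 1 => {x ∈ C | f x ∈ iterateDomain C f n}

theorem eq_iterateDomain {Cn : ℕ → Set X} (h0 : Cn 0 = univ)
    (hsucc : ∀ n, Cn (n + 1) = {x ∈ C | f x ∈ Cn n}) : Cn = iterateDomain C f := by
  funext n
  induction n with
  | zero => exact h0
  | succ n ih => rw [hsucc, ih, iterateDomain]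

theorem iterateDomain_one : iterateDomain C f 1 = C := by
  simp [iterateDomain]

theorem iterateDomain_succ_subset (n : ℕ) : iterateDomain C f (n + 1) ⊆ C :=
  fun _ hx ↦ hx.1

theorem mapsTo_iterateDomain_succ (n : ℕ) :
    MapsTo f (iterateDomain C f (n + 1)) (iterateDomain C f n) :=
  fun _ hx ↦ hx.2

theorem iterateDomain_succ_subset_self (n : ℕ) :
    iterateDomain C f (n + 1) ⊆ iterateDomain C f n := by
  induction n with
  | zero => exact subset_univ _
  | succ n ih => exact fun x hx ↦ ⟨hx.1, ih hx.2⟩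

theorem mapsTo_iterateDomain_diff (n : ℕ) :
    MapsTo f (iterateDomain C f (n + 1) \ iterateDomain C f (n + 2))
      (iterateDomain C f n \ iterateDomain C f (n + 1)) :=
  fun _ ⟨hx, hx'⟩ ↦ ⟨hx.2, fun hfx ↦ hx' ⟨hx.1, hfx⟩⟩

theorem IsClosed.iterateDomain_succ [TopologicalSpace X] (hC : IsClosed C)
    (hf : ContinuousOn f C) (n : ℕ) :
    IsClosed (iterateDomain C f (n + 1)) := by
  induction n with
  | zero => rwa [iterateDomain_one]
  | succ n ih => exact hf.preimage_isClosed_of_isClosed hC ih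

theorem relFrontier_iterateDomain_subset [TopologicalSpace X] (hC : IsClosed C)
    (hf : ContinuousOn f C) (hbdr : ∀ x ∈ frontier C, f x ∈ C) (n : ℕ) :
    relFrontier (iterateDomain C f n) (iterateDomain C f (n + 1)) ⊆
      iterateDomain C f (n + 2) := by
  induction n with
  | zero =>
    rw [iterateDomain_one, iterateDomain, relFrontier_univ]
    exact fun x hx ↦ ⟨hC.frontier_subset hx, by rw [iterateDomain_one]; exact hbdr x hx⟩
  | succ n ih =>
    intro x hx
    have hxD : x ∈ iterateDomain C f (n + 2) := (hC.iterateDomain_succ hf _).closure_subset hx.1.2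
    have hfx := (hf.mono (iterateDomain_succ_subset n)).mapsTo_relFrontier
      (iterateDomain_succ_subset_self _) (mapsTo_iterateDomain_succ _)
      (mapsTo_iterateDomain_succ _) (mapsTo_iterateDomain_diff n) hx
    exact ⟨iterateDomain_succ_subset _ hxD, ih hfx⟩

end IterateDomain

theorem dvt_relFrontier_subset_general
    {X : Type*} [TopologicalSpace X] (C : Set X)
    (hC : IsClosed C) (f : X → X) (hf : ContinuousOn f C)
    (hbdr : ∀ x ∈ frontier C, f x ∈ C)
    (Cn : ℕ → Set X) (h0 : Cn 0 = Set.univ)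
    (hsucc : ∀ n, Cn (n + 1) = {x ∈ C | f x ∈ Cn n}) :
    ∀ n, relFrontier (Cn n) (Cn (n + 1)) ⊆ Cn (n + 2) := by
  rw [eq_iterateDomain h0 hsucc]
  exact relFrontier_iterateDomain_subset hC hf hbdr

theorem dvt_relFrontier_subset
    {X : Type*} [TopologicalSpace X] (C : Set X) (hCne : C.Nonempty)
    (hC : IsClosed C) (f : X → X) (hf : ContinuousOn f C)
    (hbdr : ∀ x ∈ frontier C, f x ∈ C)
    (Cn : ℕ → Set X) (h0 : Cn 0 = Set.univ)
    (hsucc : ∀ n, Cn (n + 1) = {x ∈ C | f x ∈ Cn n}) :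
    ∀ n, relFrontier (Cn n) (Cn (n + 1)) ⊆ Cn (n + 2) :=
  dvt_relFrontier_subset_general C hC f hf hbdr Cn h0 hsucc
end

section
/- Let X be a topological space, C ⊆ X closed, f : C → X continuous with f(∂C) ⊆ C. With C_n defined by C_0 = X, C_{n+1} = {x ∈ C : f(x) ∈ C_n}, and A_n = C_n \ C_{n+1}, the set A_n ∪ C_{n+2} is closed in X for every n ∈ ℕ. -/
/-!
Writing `B n = A_n ∪ C_{n+2}`, the sets `B n` obey the same recursion `B (n+1) = C ∩ f⁻¹ (B n)`
as the `C_n`, so everything reduces to `B 0` being closed. Its complement is the set of points of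
`C` that `f` maps out of `C`; by the boundary condition these lie in the interior of `C`, where
`f` is continuous on an open set, so that complement is open.
-/

open Set

section

variable {X : Type*} {C : Set X} {f : X → X}

theorem diff_union_succ_eq_inter_preimage {D : ℕ → Set X}
    (hsucc : ∀ n, D (n + 1) = C ∩ f ⁻¹' D n) (n : ℕ) :
    (D (n + 1) \ D (n + 2)) ∪ D (n + 3) = C ∩ f ⁻¹' ((D n \ D (n + 1)) ∪ D (n + 2)) := by
  rw [preimage_union, preimage_sdiff, inter_union_distrib_left, inter_sdiff_distrib_left,
    ← hsucc, ← hsucc, ← hsucc]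

variable [TopologicalSpace X]

theorem isClosed_of_succ_eq_inter_preimage (hC : IsClosed C) (hf : ContinuousOn f C)
    {D : ℕ → Set X} (h0 : IsClosed (D 0)) (hsucc : ∀ n, D (n + 1) = C ∩ f ⁻¹' D n) :
    ∀ n, IsClosed (D n)
  | 0 => h0
  | n + 1 => hsucc n ▸ hf.preimage_isClosed_of_isClosed hC
      (isClosed_of_succ_eq_inter_preimage hC hf h0 hsucc n)

theorem isOpen_inter_preimage_compl_of_frontier (hC : IsClosed C) (hf : ContinuousOn f C)
    (hbdr : ∀ x ∈ frontier C, f x ∈ C) : IsOpen (C ∩ f ⁻¹' Cᶜ) := by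
  have hint : C ∩ f ⁻¹' Cᶜ = interior C ∩ f ⁻¹' Cᶜ := by
    refine Subset.antisymm (fun x ⟨hxC, hfx⟩ => ⟨?_, hfx⟩)
      (inter_subset_inter_left _ interior_subset)
    by_contra hx
    exact hfx (hbdr x ⟨subset_closure hxC, hx⟩)
  rw [hint]
  exact (hf.mono interior_subset).isOpen_inter_preimage isOpen_interior hC.isOpen_compl

end

theorem dvt_An_union_closed_general
    {X : Type*} [TopologicalSpace X] (C : Set X)
    (hC : IsClosed C) (f : X → X) (hf : ContinuousOn f C)
    (hbdr : ∀ x ∈ frontier C, f x ∈ C)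
    (Cn : ℕ → Set X) (h0 : Cn 0 = Set.univ)
    (hsucc : ∀ n, Cn (n + 1) = {x ∈ C | f x ∈ Cn n}) :
    ∀ n, IsClosed ((Cn n \ Cn (n + 1)) ∪ Cn (n + 2)) := by
  have hC1 : Cn 1 = C := by rw [hsucc, h0]; simp
  have hC2 : Cn 2 = C ∩ f ⁻¹' C := by rw [hsucc, hC1]; rfl
  have hB0 : (Cn 0 \ Cn 1) ∪ Cn 2 = (C ∩ f ⁻¹' Cᶜ)ᶜ := by
    rw [h0, hC1, hC2, preimage_compl, compl_inter, compl_compl, ← compl_eq_univ_sdiff,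
      union_inter_distrib_left, compl_union_self, univ_inter]
  refine isClosed_of_succ_eq_inter_preimage hC hf ?_
    (diff_union_succ_eq_inter_preimage (D := Cn) hsucc)
  rw [hB0, isClosed_compl_iff]
  exact isOpen_inter_preimage_compl_of_frontier hC hf hbdr

theorem dvt_An_union_closed
    {X : Type*} [TopologicalSpace X] (C : Set X) (hCne : C.Nonempty)
    (hC : IsClosed C) (f : X → X) (hf : ContinuousOn f C)
    (hbdr : ∀ x ∈ frontier C, f x ∈ C)
    (Cn : ℕ → Set X) (h0 : Cn 0 = Set.univ)
    (hsucc : ∀ n, Cn (n + 1) = {x ∈ C | f x ∈ Cn n}) :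
    ∀ n, IsClosed ((Cn n \ Cn (n + 1)) ∪ Cn (n + 2)) :=
  dvt_An_union_closed_general C hC f hf hbdr Cn h0 hsucc
end

section
/- Let X be a connected topological space, C ⊆ X a nonempty proper closed subset, and f : C → X continuous with f(x) ∈ C for every x ∈ ∂C. Then there exists an orbit of length 3: points x_0, x_1, x_2, x_3 with x_{i} = f(x_{i-1}) and x_{i-1} ∈ C for i = 1, 2, 3. -/
/-!
If there were no orbit of length 3, the escape set `E = C \ f ⁻¹' C` would be clopen. It lies in
`interior C` because `f` maps `∂C` into `C`, so it is open by continuity. A point `x ∈ closure E`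
with `f x ∈ C` would have `f x` a limit of points outside `C`, so `f x ∈ ∂C` and `f (f x) ∈ C`;
hence `E` is closed. As `E ⊆ C ≠ X`, connectedness forces `E = ∅`, i.e. `f` maps `C` into itself,
and any point of `C` starts an orbit of every length.
-/

open Set Topology

section EscapeSet

variable {X : Type*} [TopologicalSpace X] {C : Set X} {f : X → X}

lemma IsClosed.diff_preimage_subset_interior (hC : IsClosed C)
    (hbdr : ∀ x ∈ frontier C, f x ∈ C) : C \ f ⁻¹' C ⊆ interior C := by
  rintro x ⟨hxC, hfx⟩
  by_contra hx
  exact hfx (hbdr x (hC.frontier_eq ▸ ⟨hxC, hx⟩))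

lemma IsClosed.isOpen_diff_preimage (hC : IsClosed C) (hf : ContinuousOn f C)
    (hbdr : ∀ x ∈ frontier C, f x ∈ C) : IsOpen (C \ f ⁻¹' C) := by
  have hE : C \ f ⁻¹' C = interior C ∩ f ⁻¹' Cᶜ :=
    Subset.antisymm (fun x hx => ⟨hC.diff_preimage_subset_interior hbdr hx, hx.2⟩)
      fun x hx => ⟨interior_subset hx.1, hx.2⟩
  rw [hE]
  exact (hf.mono interior_subset).isOpen_inter_preimage isOpen_interior hC.isOpen_compl

lemma IsClosed.map_mem_frontier_of_mem_closure_diff_preimage (hC : IsClosed C)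
    (hf : ContinuousOn f C) {x : X} (hx : x ∈ closure (C \ f ⁻¹' C)) (hfx : f x ∈ C) :
    f x ∈ frontier C := by
  have hxC : x ∈ C := closure_minimal sdiff_subset hC hx
  have hlim : f x ∈ closure (f '' (C \ f ⁻¹' C)) :=
    ((hf x hxC).mono sdiff_subset).mem_closure_image hx
  refine ⟨subset_closure hfx, ?_⟩
  rw [← mem_compl_iff, ← closure_compl]
  exact closure_mono (image_subset_iff.2 fun y hy => hy.2) hlim

lemma IsClosed.isClosed_diff_preimage (hC : IsClosed C) (hf : ContinuousOn f C)
    (hbdr : ∀ x ∈ frontier C, f x ∈ C) (hno : ∀ x ∈ C, f x ∈ C → f (f x) ∉ C) :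
    IsClosed (C \ f ⁻¹' C) := by
  refine closure_subset_iff_isClosed.1 fun x hx => ?_
  have hxC : x ∈ C := closure_minimal sdiff_subset hC hx
  exact ⟨hxC, fun hfx =>
    hno x hxC hfx (hbdr _ (hC.map_mem_frontier_of_mem_closure_diff_preimage hf hx hfx))⟩

end EscapeSet

theorem dvt_orbit_three
    {X : Type*} [TopologicalSpace X] [ConnectedSpace X]
    (C : Set X) (hCne : C.Nonempty) (hCproper : C ≠ Set.univ)
    (hC : IsClosed C) (f : X → X) (hf : ContinuousOn f C)
    (hbdr : ∀ x ∈ frontier C, f x ∈ C) :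
    ∃ x₀, x₀ ∈ C ∧ f x₀ ∈ C ∧ f (f x₀) ∈ C := by
  by_contra! hno
  have hclopen : IsClopen (C \ f ⁻¹' C) :=
    ⟨hC.isClosed_diff_preimage hf hbdr hno, hC.isOpen_diff_preimage hf hbdr⟩
  have hmaps : MapsTo f C C := by
    rcases isClopen_iff.1 hclopen with hempty | huniv
    · exact sdiff_eq_empty.1 hempty
    · exact absurd (eq_univ_of_univ_subset (huniv ▸ sdiff_subset)) hCproper
  obtain ⟨x₀, hx₀⟩ := hCne
  exact hno x₀ hx₀ (hmaps hx₀) (hmaps (hmaps hx₀))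
end

section
/- Let X be a connected topological space, C ⊆ X a nonempty connected closed subset, and f : C → X continuous with f(x) ∈ C for every x ∈ ∂C. Then there exists an orbit of length 4: points x_0,...,x_4 with x_i = f(x_{i-1}) and x_{i-1} ∈ C for i = 1,...,4. -/
/-!
Let `U = C ∩ f⁻¹(Cᶜ)` be the set of points of `C` that leave `C` in one step. Since `∂C` maps
into `C`, `U` lies in the interior of `C`, so it is open, and every point `y ∈ ∂U` satisfies
`y ∈ C` and `f y ∈ ∂C`; hence `y, f y, f² y ∈ C`. If `f` does not map `C` into itself, `U` is a
nonempty open set other than `X`, so `∂U ≠ ∅` by connectedness of `X`. If `f '' C` meets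
`closure U`, then, being connected and not contained in `closure U ⊆ C`, it meets `∂U`, and a
preimage in `C` of a point of `∂U` starts an orbit of length four. Otherwise no point of `C`
maps into `U`; then for `y ∈ ∂U` also `f² y ∉ U`, so `f³ y ∈ C`.
-/

open Set

section EscapeSet

variable {X : Type*} {C : Set X} {f : X → X}

def escapeSet (C : Set X) (f : X → X) : Set X := C ∩ f ⁻¹' Cᶜ

theorem escapeSet_subset : escapeSet C f ⊆ C := inter_subset_left

variable [TopologicalSpace X]

theorem escapeSet_eq_interior_inter (hC : IsClosed C) (hbdr : ∀ x ∈ frontier C, f x ∈ C) :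
    escapeSet C f = interior C ∩ f ⁻¹' Cᶜ := by
  refine Subset.antisymm (fun x ⟨hxC, hfx⟩ => ⟨?_, hfx⟩) (inter_subset_inter_left _ interior_subset)
  by_contra hx
  exact hfx (hbdr x ⟨hC.closure_eq.symm ▸ hxC, hx⟩)

theorem isOpen_escapeSet (hC : IsClosed C) (hf : ContinuousOn f C)
    (hbdr : ∀ x ∈ frontier C, f x ∈ C) : IsOpen (escapeSet C f) := by
  rw [escapeSet_eq_interior_inter hC hbdr]
  exact (hf.mono interior_subset).isOpen_inter_preimage isOpen_interior hC.isOpen_compl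

theorem mem_and_map_mem_frontier_of_mem_frontier_escapeSet (hC : IsClosed C)
    (hf : ContinuousOn f C) (hbdr : ∀ x ∈ frontier C, f x ∈ C) {y : X}
    (hy : y ∈ frontier (escapeSet C f)) : y ∈ C ∧ f y ∈ frontier C := by
  rw [(isOpen_escapeSet hC hf hbdr).frontier_eq] at hy
  obtain ⟨hyU, hyU'⟩ := hy
  have hyC : y ∈ C := closure_minimal escapeSet_subset hC hyU
  have hfyC : f y ∈ C := by_contra fun h => hyU' ⟨hyC, h⟩
  have hfy : f y ∈ closure (f '' escapeSet C f) :=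
    ((hf y hyC).mono escapeSet_subset).mem_closure_image hyU
  have hfy' : f y ∈ closure Cᶜ := closure_mono (image_subset_iff.mpr fun _ hx => hx.2) hfy
  rw [frontier_eq_closure_inter_closure, hC.closure_eq]
  exact ⟨hyC, hfyC, hfy'⟩

end EscapeSet

theorem dvt_orbit_four
    {X : Type*} [TopologicalSpace X] [ConnectedSpace X]
    (C : Set X) (hCconn : IsConnected C)
    (hC : IsClosed C) (f : X → X) (hf : ContinuousOn f C)
    (hbdr : ∀ x ∈ frontier C, f x ∈ C) :
    ∃ x₀, x₀ ∈ C ∧ f x₀ ∈ C ∧ f (f x₀) ∈ C ∧ f (f (f x₀)) ∈ C := by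
  by_cases hinv : MapsTo f C C
  · obtain ⟨x, hx⟩ := hCconn.nonempty
    exact ⟨x, hx, hinv hx, hinv (hinv hx), hinv (hinv (hinv hx))⟩
  obtain ⟨u, huC, hu⟩ : ∃ u ∈ C, f u ∉ C := by simpa [MapsTo] using hinv
  set U := escapeSet C f
  have horbit3 {y} (hy : y ∈ frontier U) : y ∈ C ∧ f y ∈ C ∧ f (f y) ∈ C :=
    have ⟨hyC, hfy⟩ := mem_and_map_mem_frontier_of_mem_frontier_escapeSet hC hf hbdr hy
    ⟨hyC, hC.frontier_subset hfy, hbdr _ hfy⟩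
  have hclU : closure U ⊆ C := closure_minimal escapeSet_subset hC
  by_cases hhit : (f '' C ∩ closure U).Nonempty
  · obtain ⟨_, ⟨x, hxC, rfl⟩, hfx⟩ := (hCconn.isPreconnected.image f hf).inter_frontier_nonempty
      hhit ⟨f u, mem_image_of_mem f huC, fun h => hu (hclU h)⟩
    exact ⟨x, hxC, horbit3 (frontier_closure_subset hfx)⟩
  · obtain ⟨y, hy⟩ : (frontier U).Nonempty :=
      nonempty_frontier_iff.mpr ⟨⟨u, huC, hu⟩, fun h => hu (escapeSet_subset (h ▸ mem_univ (f u)))⟩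
    obtain ⟨hyC, hfyC, hffyC⟩ := horbit3 hy
    have hffy : f (f y) ∉ U := fun h => hhit ⟨_, mem_image_of_mem f hfyC, subset_closure h⟩
    exact ⟨y, hyC, hfyC, hffyC, by_contra fun h => hffy ⟨hffyC, h⟩⟩
end

section
/- Let X be a topological space, C ⊆ X a nonempty closed subset, and f : C → X continuous with f(∂C) ⊆ C. Suppose ∂C is a retract of X \ Int(C) and C has the fixed point property (every continuous self-map of C has a fixed point). Then f has a fixed point: there exists x ∈ C with f(x) = x. -/
/-!
Gluing `id` on `C` with `r` on `X \ Int C` gives a retraction `ρ : X → C` sending `X \ C` into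
`∂C`; apply the fixed point property of `C` to `ρ ∘ f`. At a fixed point `x`, either `f x ∈ C`
and `f x = ρ (f x) = x`, or `f x ∉ C`, in which case `x = ρ (f x) ∈ ∂C`, so `f x ∈ C` after all.
-/

section

open Set

variable {X : Type*} [TopologicalSpace X] {C : Set X} {r : X → X} [∀ x, Decidable (x ∈ C)]

theorem continuous_piecewise_id_of_frontier_retraction (hC : IsClosed C)
    (hr : ContinuousOn r (interior C)ᶜ) (hrid : ∀ x ∈ frontier C, r x = x) :
    Continuous (C.piecewise id r) :=
  continuous_piecewise (fun x hx ↦ (hrid x hx).symm) (by rw [hC.closure_eq]; exact continuousOn_id)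
    (by rwa [closure_compl])

theorem piecewise_id_mem_frontier_of_notMem (hrmaps : ∀ x ∈ (interior C)ᶜ, r x ∈ frontier C)
    {x : X} (hx : x ∉ C) : C.piecewise id r x ∈ frontier C := by
  rw [piecewise_eq_of_notMem _ _ _ hx]
  exact hrmaps x fun hi ↦ hx (interior_subset hi)

theorem piecewise_id_mem_of_frontier_retraction (hC : IsClosed C)
    (hrmaps : ∀ x ∈ (interior C)ᶜ, r x ∈ frontier C) (x : X) : C.piecewise id r x ∈ C := by
  by_cases hx : x ∈ C
  · simp [hx]
  · exact hC.frontier_subset (piecewise_id_mem_frontier_of_notMem hrmaps hx)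

end

theorem exists_fixedPoint_of_retraction {X : Type*} [TopologicalSpace X] {C : Set X}
    {f ρ : X → X} (hf : ContinuousOn f C) (hbdr : ∀ x ∈ frontier C, f x ∈ C)
    (hρ : Continuous ρ) (hρC : ∀ x, ρ x ∈ C) (hρid : ∀ x ∈ C, ρ x = x)
    (hρfrontier : ∀ x ∉ C, ρ x ∈ frontier C)
    (hfpp : ∀ g : X → X, ContinuousOn g C → (∀ x ∈ C, g x ∈ C) → ∃ x ∈ C, g x = x) :
    ∃ x ∈ C, f x = x := by
  obtain ⟨x, hxC, hx⟩ := hfpp (ρ ∘ f) (hρ.comp_continuousOn hf) fun x _ ↦ hρC (f x)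
  refine ⟨x, hxC, ?_⟩
  by_cases hfx : f x ∈ C
  · rwa [Function.comp_apply, hρid _ hfx] at hx
  · have hx_frontier : x ∈ frontier C := hx ▸ hρfrontier _ hfx
    exact absurd (hbdr x hx_frontier) hfx

theorem dvt_fixed_point_of_retract_general
    {X : Type*} [TopologicalSpace X] (C : Set X)
    (hC : IsClosed C) (f : X → X) (hf : ContinuousOn f C)
    (hbdr : ∀ x ∈ frontier C, f x ∈ C)
    (r : X → X) (hr : ContinuousOn r (interior C)ᶜ)
    (hrmaps : ∀ x ∈ (interior C)ᶜ, r x ∈ frontier C)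
    (hrid : ∀ x ∈ frontier C, r x = x)
    (hfpp : ∀ g : X → X, ContinuousOn g C → (∀ x ∈ C, g x ∈ C) →
      ∃ x ∈ C, g x = x) :
    ∃ x ∈ C, f x = x := by
  classical
  exact exists_fixedPoint_of_retraction hf hbdr
    (continuous_piecewise_id_of_frontier_retraction hC hr hrid)
    (piecewise_id_mem_of_frontier_retraction hC hrmaps)
    (fun x hx ↦ Set.piecewise_eq_of_mem _ _ _ hx)
    (fun x hx ↦ piecewise_id_mem_frontier_of_notMem hrmaps hx) hfpp

theorem dvt_fixed_point_of_retract
    {X : Type*} [TopologicalSpace X] (C : Set X) (hCne : C.Nonempty)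
    (hC : IsClosed C) (f : X → X) (hf : ContinuousOn f C)
    (hbdr : ∀ x ∈ frontier C, f x ∈ C)
    (r : X → X) (hr : ContinuousOn r (interior C)ᶜ)
    (hrmaps : ∀ x ∈ (interior C)ᶜ, r x ∈ frontier C)
    (hrid : ∀ x ∈ frontier C, r x = x)
    (hfpp : ∀ g : X → X, ContinuousOn g C → (∀ x ∈ C, g x ∈ C) →
      ∃ x ∈ C, g x = x) :
    ∃ x ∈ C, f x = x :=
  dvt_fixed_point_of_retract_general C hC f hf hbdr r hr hrmaps hrid hfpp
end

section
/- Let X be a topological space, C ⊆ X closed, and f : C → 𝒫*(X) a set-valued map that is upper semicontinuous (for every open U ⊆ X, {x ∈ C : f(x) ⊆ U} is open in C) and satisfies f(x) ∩ C ≠ ∅ for every x ∈ ∂C. Define C_0 = X, C_{n+1} = {x ∈ C : f(x) ∩ C_n ≠ ∅}, and A_n = C_n \ C_{n+1}. Then A_0 and A_1 are open subsets of X. -/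
/-!
Since `F x` is nonempty on `C`, `C₁ = C`, so `A₀ = Cᶜ` is open. Then `A₁` is the set of points of
`C` that `F` maps into `Cᶜ`: it is open in `C` by upper semicontinuity, and the boundary condition
keeps it inside `interior C`, where being open in `C` and being open in `X` agree.
-/

open Set

section SetValued

variable {X : Type*}

lemma sep_nonempty_inter_univ_eq (C : Set X) (F : X → Set X) (hne : ∀ x ∈ C, (F x).Nonempty) :
    {x ∈ C | (F x ∩ univ).Nonempty} = C := by
  simpa only [inter_univ, sep_eq_self_iff_mem_true] using hne

lemma diff_sep_nonempty_inter_eq (C : Set X) (F : X → Set X) :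
    C \ {x ∈ C | (F x ∩ C).Nonempty} = {x ∈ C | F x ⊆ Cᶜ} := by
  ext x
  simp only [mem_sdiff, mem_ofPred_eq, subset_compl_iff_disjoint_right,
    ← not_nonempty_iff_eq_empty, disjoint_iff_inter_eq_empty]
  tauto

variable [TopologicalSpace X]

lemma isOpen_of_isOpen_coe_preimage_of_subset_interior {C T : Set X}
    (hT : IsOpen ((↑) ⁻¹' T : Set C)) (hTC : T ⊆ interior C) : IsOpen T := by
  obtain ⟨U, hU, hUT⟩ := isOpen_induced_iff.mp hT
  suffices T = U ∩ interior C from this ▸ hU.inter isOpen_interior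
  ext x
  constructor
  · intro hx
    have hxU : (⟨x, interior_subset (hTC hx)⟩ : C) ∈ (↑) ⁻¹' U := hUT ▸ hx
    exact ⟨hxU, hTC hx⟩
  · rintro ⟨hxU, hxC⟩
    exact (hUT ▸ hxU : (⟨x, interior_subset hxC⟩ : C) ∈ (↑) ⁻¹' T)

variable {C : Set X} {F : X → Set X}

lemma sep_subset_compl_subset_interior (hbdr : ∀ x ∈ frontier C, (F x ∩ C).Nonempty) :
    {x ∈ C | F x ⊆ Cᶜ} ⊆ interior C := by
  rintro x ⟨hxC, hxF⟩
  by_contra hxi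
  obtain ⟨y, hyF, hyC⟩ := hbdr x ⟨subset_closure hxC, hxi⟩
  exact hxF hyF hyC

lemma isOpen_sep_subset_compl (husc : IsOpen {x : C | F x ⊆ Cᶜ})
    (hbdr : ∀ x ∈ frontier C, (F x ∩ C).Nonempty) : IsOpen {x ∈ C | F x ⊆ Cᶜ} :=
  isOpen_of_isOpen_coe_preimage_of_subset_interior
    (by simpa only [preimage_ofPred_eq, Subtype.coe_prop, true_and] using husc)
    (sep_subset_compl_subset_interior hbdr)

end SetValued

theorem dvt_corr_A0_A1_open_general
    {X : Type*} [TopologicalSpace X] (C : Set X)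
    (hC : IsClosed C) (F : X → Set X)
    (hne : ∀ x ∈ C, (F x).Nonempty)
    (husc : ∀ U : Set X, IsOpen U → IsOpen {x : C | F (x : X) ⊆ U})
    (hbdr : ∀ x ∈ frontier C, (F x ∩ C).Nonempty)
    (Cn : ℕ → Set X) (h0 : Cn 0 = Set.univ)
    (hsucc : ∀ n, Cn (n + 1) = {x ∈ C | (F x ∩ Cn n).Nonempty}) :
    IsOpen (Cn 0 \ Cn 1) ∧ IsOpen (Cn 1 \ Cn 2) := by
  have hC1 : Cn 1 = C := by rw [hsucc, h0, sep_nonempty_inter_univ_eq C F hne]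
  have hC2 : Cn 2 = {x ∈ C | (F x ∩ C).Nonempty} := by rw [hsucc, hC1]
  rw [h0, hC1, hC2, ← compl_eq_univ_sdiff, diff_sep_nonempty_inter_eq]
  exact ⟨hC.isOpen_compl, isOpen_sep_subset_compl (husc _ hC.isOpen_compl) hbdr⟩

theorem dvt_corr_A0_A1_open
    {X : Type*} [TopologicalSpace X] (C : Set X) (hCne : C.Nonempty)
    (hC : IsClosed C) (F : X → Set X)
    (hne : ∀ x ∈ C, (F x).Nonempty)
    (husc : ∀ U : Set X, IsOpen U → IsOpen {x : C | F (x : X) ⊆ U})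
    (hbdr : ∀ x ∈ frontier C, (F x ∩ C).Nonempty)
    (Cn : ℕ → Set X) (h0 : Cn 0 = Set.univ)
    (hsucc : ∀ n, Cn (n + 1) = {x ∈ C | (F x ∩ Cn n).Nonempty}) :
    IsOpen (Cn 0 \ Cn 1) ∧ IsOpen (Cn 1 \ Cn 2) :=
  dvt_corr_A0_A1_open_general C hC F hne husc hbdr Cn h0 hsucc
end

section
/- Let X be a topological space, C ⊆ X closed, and f : C → 𝒫*(X) an upper semicontinuous set-valued map with connected values such that f(x) ∩ C ≠ ∅ for every x ∈ ∂C. With C_n defined by C_0 = X and C_{n+1} = {x ∈ C : f(x) ∩ C_n ≠ ∅}, the boundary of C_2 relative to C_1 is contained in C_3. -/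
/-! Write `C₂ = {y ∈ C | F y ∩ C ≠ ∅}`. Its complement in `C` is `{y ∈ C | F y ⊆ Cᶜ}`, open in `C`
by upper semicontinuity, so `C₂` is closed in `C` and a point `x` of `relFrontier C C₂` has
`F x ∩ C ≠ ∅`. If `F x` missed `C₂`, it would miss `frontier C ⊆ C₂`, so the connected set `F x`
would lie in `interior C`; by upper semicontinuity again all `z ∈ C` near `x` would have
`∅ ≠ F z ⊆ C`, i.e. `z ∈ C₂`, contradicting `x ∈ closure (C \ C₂)`. -/

open Set

section

variable {X : Type*} [TopologicalSpace X]

theorem IsPreconnected.subset_interior_of_disjoint_frontier {s t : Set X}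
    (hs : IsPreconnected s) (hst : (s ∩ t).Nonempty) (hfr : Disjoint s (frontier t)) :
    s ⊆ interior t := by
  have hcover : s ⊆ interior t ∪ (closure t)ᶜ := fun y hys => by
    by_contra h
    simp only [mem_union, mem_compl_iff, not_or, not_not] at h
    exact hfr.ne_of_mem hys ⟨h.2, h.1⟩ rfl
  obtain ⟨y, hys, hyt⟩ := hst
  exact hs.subset_left_of_subset_union isOpen_interior isClosed_closure.isOpen_compl
    (disjoint_compl_right_iff_subset.2 interior_subset_closure) hcover
    ⟨y, hys, (hcover hys).resolve_right (not_not.2 (subset_closure hyt))⟩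

theorem exists_mem_subset_of_mem_closure_of_isOpen_setOf_subset {C S U : Set X}
    {F : X → Set X} (hFU : IsOpen {x : C | F (x : X) ⊆ U}) {x : X} (hx : x ∈ C) (hFx : F x ⊆ U) (hS : S ⊆ C) (hxS : x ∈ closure S) :
    ∃ z ∈ S, F z ⊆ U := by
  have hxS' : (⟨x, hx⟩ : C) ∈ closure (((↑) : C → X) ⁻¹' S) := by
    rwa [closure_subtype, Subtype.image_preimage_coe, inter_eq_self_of_subset_right hS]
  obtain ⟨z, hzU, hzS⟩ := mem_closure_iff.1 hxS' _ hFU hFx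
  exact ⟨z, hzS, hzU⟩

end

theorem dvt_corr_relFrontier_C2_subset_C3_general
    {X : Type*} [TopologicalSpace X] (C : Set X)
    (hC : IsClosed C) (F : X → Set X)
    (hne : ∀ x ∈ C, (F x).Nonempty)
    (hconn : ∀ x ∈ C, IsPreconnected (F x))
    (husc : ∀ U : Set X, IsOpen U → IsOpen {x : C | F (x : X) ⊆ U})
    (hbdr : ∀ x ∈ frontier C, (F x ∩ C).Nonempty)
    (Cn : ℕ → Set X) (h0 : Cn 0 = Set.univ)
    (hsucc : ∀ n, Cn (n + 1) = {x ∈ C | (F x ∩ Cn n).Nonempty}) :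
    relFrontier (Cn 1) (Cn 2) ⊆ Cn 3 := by
  have h1 : Cn 1 = C := by
    rw [hsucc, h0]
    exact sep_eq_self_iff_mem_true.2 fun y hy => by simpa using hne y hy
  have h2 : Cn 2 = {y ∈ C | (F y ∩ C).Nonempty} := by rw [hsucc, h1]
  rintro x ⟨⟨hxC, hx₂⟩, hx₁₂⟩
  rw [h1, h2] at hx₁₂
  rw [h1] at hxC
  rw [h2] at hx₂
  rw [hsucc 2, h2]
  refine ⟨hxC, ?_⟩
  by_contra hxF
  have hFC : (F x ∩ C).Nonempty := by
    by_contra h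
    have hFx : F x ⊆ Cᶜ := fun y hy hyC => h ⟨y, hy, hyC⟩
    obtain ⟨z, ⟨-, w, hwF, hwC⟩, hzC⟩ := exists_mem_subset_of_mem_closure_of_isOpen_setOf_subset
      (husc _ hC.isOpen_compl) hxC hFx (sep_subset _ _) hx₂
    exact hzC hwF hwC
  have hfr : Disjoint (F x) (frontier C) := disjoint_left.2 fun y hyF hyfr =>
    hxF ⟨y, hyF, hC.frontier_subset hyfr, hbdr y hyfr⟩
  have hint := (hconn x hxC).subset_interior_of_disjoint_frontier hFC hfr
  obtain ⟨z, ⟨hzC, hz₂⟩, hzint⟩ := exists_mem_subset_of_mem_closure_of_isOpen_setOf_subset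
    (husc _ isOpen_interior) hxC hint sdiff_subset hx₁₂
  obtain ⟨w, hw⟩ := hne z hzC
  exact hz₂ ⟨hzC, w, hw, interior_subset (hzint hw)⟩

theorem dvt_corr_relFrontier_C2_subset_C3
    {X : Type*} [TopologicalSpace X] (C : Set X) (hCne : C.Nonempty)
    (hC : IsClosed C) (F : X → Set X)
    (hne : ∀ x ∈ C, (F x).Nonempty)
    (hconn : ∀ x ∈ C, IsPreconnected (F x))
    (husc : ∀ U : Set X, IsOpen U → IsOpen {x : C | F (x : X) ⊆ U})
    (hbdr : ∀ x ∈ frontier C, (F x ∩ C).Nonempty)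
    (Cn : ℕ → Set X) (h0 : Cn 0 = Set.univ)
    (hsucc : ∀ n, Cn (n + 1) = {x ∈ C | (F x ∩ Cn n).Nonempty}) :
    relFrontier (Cn 1) (Cn 2) ⊆ Cn 3 :=
  dvt_corr_relFrontier_C2_subset_C3_general C hC F hne hconn husc hbdr Cn h0 hsucc
end

section
/- Let X be a topological space, C ⊆ X a closed subset, and f : C → 𝒫*(X) an upper semicontinuous set-valued map with connected values. If A ⊆ C is connected, then the image f(A) = ⋃_{x ∈ A} f(x) is connected. -/
/- If the image were split by open sets `u`, `v`, each (connected) value would lie in `u` or in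
`v`; upper semicontinuity makes both alternatives open conditions on the argument, and nonempty
values make them exclusive, so connectedness of `A` forces all values to the same side. -/

open Set

theorem IsPreconnected.biUnion_of_upperSemicontinuous {α X : Type*} [TopologicalSpace α]
    [TopologicalSpace X] {F : α → Set X} (husc : ∀ U : Set X, IsOpen U → IsOpen {x | F x ⊆ U})
    {s : Set α} (hs : IsPreconnected s) (hne : ∀ x ∈ s, (F x).Nonempty)
    (hconn : ∀ x ∈ s, IsPreconnected (F x)) : IsPreconnected (⋃ x ∈ s, F x) := by
  rw [isPreconnected_iff_subset_of_disjoint]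
  intro u v hu hv hcover hdisj
  have hside : ∀ x ∈ s, F x ⊆ u ∨ F x ⊆ v := fun x hx =>
    isPreconnected_iff_subset_of_disjoint.mp (hconn x hx) u v hu hv
      ((subset_biUnion_of_mem hx).trans hcover)
      (subset_empty_iff.mp <| hdisj ▸ inter_subset_inter_left _ (subset_biUnion_of_mem hx))
  have hexcl : s ∩ ({x | F x ⊆ u} ∩ {x | F x ⊆ v}) = ∅ := by
    refine eq_empty_of_forall_notMem fun x ⟨hx, hxu, hxv⟩ => ?_
    obtain ⟨y, hy⟩ := hne x hx
    exact (eq_empty_iff_forall_notMem.mp hdisj) y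
      ⟨mem_biUnion hx hy, hxu hy, hxv hy⟩
  rcases isPreconnected_iff_subset_of_disjoint.mp hs _ _ (husc u hu) (husc v hv) hside hexcl
    with hsu | hsv
  · exact Or.inl (iUnion₂_subset fun x hx => hsu hx)
  · exact Or.inr (iUnion₂_subset fun x hx => hsv hx)

theorem dvt_corr_image_connected_general
    {X : Type*} [TopologicalSpace X] (C : Set X)
    (F : X → Set X)
    (hne : ∀ x ∈ C, (F x).Nonempty)
    (hconn : ∀ x ∈ C, IsPreconnected (F x))
    (husc : ∀ U : Set X, IsOpen U → IsOpen {x : C | F (x : X) ⊆ U})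
    (A : Set X) (hAC : A ⊆ C) (hA : IsConnected A) :
    IsConnected (⋃ x ∈ A, F x) := by
  have hA_eq : A = ((↑) : C → X) '' ((↑) ⁻¹' A) := by
    rw [Subtype.image_preimage_coe, inter_eq_right.mpr hAC]
  have hA' : IsPreconnected (((↑) : C → X) ⁻¹' A) := by
    rw [← Topology.IsInducing.subtypeVal.isPreconnected_image, ← hA_eq]
    exact hA.isPreconnected
  obtain ⟨a, ha⟩ := hA.nonempty
  refine ⟨(hne a (hAC ha)).mono (subset_biUnion_of_mem ha), ?_⟩
  rw [hA_eq, biUnion_image]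
  exact hA'.biUnion_of_upperSemicontinuous husc (fun x _ => hne x x.2) (fun x _ => hconn x x.2)

theorem dvt_corr_image_connected
    {X : Type*} [TopologicalSpace X] (C : Set X) (hC : IsClosed C)
    (F : X → Set X)
    (hne : ∀ x ∈ C, (F x).Nonempty)
    (hconn : ∀ x ∈ C, IsPreconnected (F x))
    (husc : ∀ U : Set X, IsOpen U → IsOpen {x : C | F (x : X) ⊆ U})
    (A : Set X) (hAC : A ⊆ C) (hA : IsConnected A) :
    IsConnected (⋃ x ∈ A, F x) :=
  dvt_corr_image_connected_general C F hne hconn husc A hAC hA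
end

section
/- Let X be a connected topological space, C ⊆ X a nonempty connected closed subset, and f : C → 𝒫*(X) upper semicontinuous with connected values and f(x) ∩ C ≠ ∅ for all x ∈ ∂C. Then there exists a chain x_0,...,x_4 with x_i ∈ f(x_{i-1}) and x_{i-1} ∈ C for i = 1,...,4. -/
/-!
Let `B ⊆ C` be the points that `F` maps entirely outside `C`, and let `A₁`, `A₂`, `A₃` be the points
of `C` from which one, two, three steps of a chain inside `C` are possible. The boundary condition
puts `B` in the interior of `C`, so `B` is open, and upper semicontinuity keeps the points mapped
into `B` away from `closure B`. If `A₃` were empty, no value `F x` could meet `closure B \ B`, so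
by connectedness each value lies in `B` or outside `closure B`; upper semicontinuity then splits
`C` into two disjoint, nonempty, relatively open pieces.
-/

section

open Set

variable {X : Type*} {C : Set X} {F : X → Set X}

def upperInv (C : Set X) (F : X → Set X) (U : Set X) : Set X := {x | x ∈ C ∧ F x ⊆ U}

def lowerInv (C : Set X) (F : X → Set X) (S : Set X) : Set X :=
  {x | x ∈ C ∧ (F x ∩ S).Nonempty}

theorem upperInv_mono {U U' : Set X} (h : U ⊆ U') : upperInv C F U ⊆ upperInv C F U' :=
  fun _ hx => ⟨hx.1, hx.2.trans h⟩

theorem mem_upperInv_compl_iff {S : Set X} {x : X} (hx : x ∈ C) :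
    x ∈ upperInv C F Sᶜ ↔ x ∉ lowerInv C F S := by
  simp [upperInv, lowerInv, hx, subset_compl_iff_disjoint_right, disjoint_iff_inter_eq_empty,
    not_nonempty_iff_eq_empty]

theorem disjoint_upperInv (hne : ∀ x ∈ C, (F x).Nonempty) {U U' : Set X}
    (hUU' : Disjoint U U') : Disjoint (upperInv C F U) (upperInv C F U') := by
  refine disjoint_left.2 fun x hx hx' => ?_
  obtain ⟨y, hy⟩ := hne x hx.1
  exact disjoint_left.1 hUU' (hx.2 hy) (hx'.2 hy)

variable [TopologicalSpace X]

def IsUpperSemicontinuousOn (C : Set X) (F : X → Set X) : Prop :=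
  ∀ U : Set X, IsOpen U → IsOpen {x : C | F (x : X) ⊆ U}

theorem exists_isOpen_inter_eq_upperInv
    (husc : IsUpperSemicontinuousOn C F) {U : Set X} (hU : IsOpen U) :
    ∃ V, IsOpen V ∧ C ∩ V = upperInv C F U := by
  obtain ⟨V, hV, hVeq⟩ := isOpen_induced_iff.mp (husc U hU)
  refine ⟨V, hV, ext fun x => ⟨fun ⟨hxC, hxV⟩ => ?_, fun ⟨hxC, hxU⟩ => ?_⟩⟩
  · exact ⟨hxC, (Set.ext_iff.mp hVeq ⟨x, hxC⟩).mp hxV⟩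
  · exact ⟨hxC, (Set.ext_iff.mp hVeq ⟨x, hxC⟩).mpr hxU⟩

theorem disjoint_closure_upperInv (hne : ∀ x ∈ C, (F x).Nonempty)
    (husc : IsUpperSemicontinuousOn C F) {U U' : Set X}
    (hU' : IsOpen U') (hUU' : Disjoint U U') :
    Disjoint (closure (upperInv C F U)) (upperInv C F U') := by
  obtain ⟨V, hV, hCV⟩ := exists_isOpen_inter_eq_upperInv husc hU'
  have hdisj : Disjoint (upperInv C F U) V := disjoint_left.2 fun x hx hxV =>
    disjoint_left.1 (disjoint_upperInv hne hUU') hx (hCV ▸ ⟨hx.1, hxV⟩)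
  exact (hdisj.closure_left hV).mono_right (hCV ▸ inter_subset_right)

theorem IsPreconnected.not_subset_upperInv_union (hCpre : IsPreconnected C)
    (hne : ∀ x ∈ C, (F x).Nonempty)
    (husc : IsUpperSemicontinuousOn C F) {U U' : Set X}
    (hU : IsOpen U) (hU' : IsOpen U') (hUU' : Disjoint U U')
    (h : (upperInv C F U).Nonempty) (h' : (upperInv C F U').Nonempty) :
    ¬C ⊆ upperInv C F U ∪ upperInv C F U' := by
  intro hcover
  have hdisj := disjoint_upperInv hne hUU'
  obtain ⟨V, hV, hCV⟩ := exists_isOpen_inter_eq_upperInv husc hU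
  obtain ⟨V', hV', hCV'⟩ := exists_isOpen_inter_eq_upperInv husc hU'
  rw [← hCV, ← hCV'] at hcover hdisj
  rw [← hCV] at h
  rw [← hCV'] at h'
  obtain ⟨x, hxC, hxV, hxV'⟩ :=
    hCpre V V' hV hV' (fun x hx => (hcover hx).imp And.right And.right) h h'
  exact disjoint_left.1 hdisj ⟨hxC, hxV⟩ ⟨hxC, hxV'⟩

theorem upperInv_compl_subset_interior (hC : IsClosed C)
    (hbdr : ∀ x ∈ frontier C, (F x ∩ C).Nonempty) : upperInv C F Cᶜ ⊆ interior C := by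
  intro x hx
  by_contra hint
  obtain ⟨y, hyF, hyC⟩ := hbdr x (by rw [hC.frontier_eq]; exact ⟨hx.1, hint⟩)
  exact hx.2 hyF hyC

theorem isOpen_upperInv_compl (hC : IsClosed C)
    (husc : IsUpperSemicontinuousOn C F)
    (hbdr : ∀ x ∈ frontier C, (F x ∩ C).Nonempty) : IsOpen (upperInv C F Cᶜ) := by
  obtain ⟨V, hV, hCV⟩ := exists_isOpen_inter_eq_upperInv husc hC.isOpen_compl
  have hint := upperInv_compl_subset_interior hC hbdr
  rw [← hCV] at hint ⊢
  rw [← inter_eq_right.2 hint, ← inter_assoc, inter_eq_left.2 interior_subset]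
  exact isOpen_interior.inter hV

theorem disjoint_closure_upperInv_compl_upperInv (hC : IsClosed C)
    (hne : ∀ x ∈ C, (F x).Nonempty)
    (husc : IsUpperSemicontinuousOn C F)
    (hbdr : ∀ x ∈ frontier C, (F x ∩ C).Nonempty) :
    Disjoint (closure (upperInv C F Cᶜ)) (upperInv C F (upperInv C F Cᶜ)) :=
  (disjoint_closure_upperInv hne husc isOpen_interior
    (disjoint_compl_left.mono_right interior_subset)).mono_right
    (upperInv_mono (upperInv_compl_subset_interior hC hbdr))

theorem mem_upperInv_upperInv_compl (hC : IsClosed C)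
    (hconn : ∀ x ∈ C, IsPreconnected (F x))
    (husc : IsUpperSemicontinuousOn C F)
    (hbdr : ∀ x ∈ frontier C, (F x ∩ C).Nonempty) {x : X} (h₁ : x ∈ lowerInv C F C)
    (h₂ : x ∉ lowerInv C F (lowerInv C F C)) : x ∈ upperInv C F (upperInv C F Cᶜ) := by
  obtain ⟨hxC, hmeet⟩ := h₁
  have hsplit : F x ⊆ upperInv C F Cᶜ ∪ Cᶜ := fun y hy => by
    by_cases hyC : y ∈ C
    · exact Or.inl ((mem_upperInv_compl_iff hyC).2 fun hy₁ => h₂ ⟨hxC, y, hy, hy₁⟩)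
    · exact Or.inr hyC
  refine ⟨hxC, ((hconn x hxC).subset_or_subset (isOpen_upperInv_compl hC husc hbdr)
    hC.isOpen_compl (disjoint_compl_right.mono_left fun y hy => hy.1) hsplit).resolve_right ?_⟩
  obtain ⟨y, hy, hyC⟩ := hmeet
  exact fun hFC => hFC hy hyC

theorem lowerInv_nonempty [ConnectedSpace X] (hCne : C.Nonempty) (hC : IsClosed C)
    (hne : ∀ x ∈ C, (F x).Nonempty) (hbdr : ∀ x ∈ frontier C, (F x ∩ C).Nonempty) :
    (lowerInv C F C).Nonempty := by
  rcases (frontier C).eq_empty_or_nonempty with hfr | ⟨z, hz⟩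
  · have hCuniv : C = univ := (isClopen_iff_frontier_eq_empty.2 hfr).eq_univ hCne
    obtain ⟨x, hx⟩ := hCne
    obtain ⟨y, hy⟩ := hne x hx
    exact ⟨x, hx, y, hy, hCuniv ▸ mem_univ y⟩
  · exact ⟨z, hC.frontier_subset hz, hbdr z hz⟩

theorem lowerInv_lowerInv_lowerInv_nonempty [ConnectedSpace X] (hCconn : IsConnected C)
    (hC : IsClosed C) (hne : ∀ x ∈ C, (F x).Nonempty) (hconn : ∀ x ∈ C, IsPreconnected (F x))
    (husc : IsUpperSemicontinuousOn C F)
    (hbdr : ∀ x ∈ frontier C, (F x ∩ C).Nonempty) :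
    (lowerInv C F (lowerInv C F (lowerInv C F C))).Nonempty := by
  set B := upperInv C F Cᶜ
  set A₁ := lowerInv C F C
  set A₂ := lowerInv C F A₁
  by_contra hA₃
  replace hA₃ : ∀ x ∈ C, ∀ y ∈ F x, y ∉ A₂ := fun x hx y hy hyA₂ => hA₃ ⟨x, hx, y, hy, hyA₂⟩
  have hBopen : IsOpen B := isOpen_upperInv_compl hC husc hbdr
  have hclB : closure B ⊆ C := closure_minimal (fun x hx => hx.1) hC
  have hP : Disjoint (closure B) (upperInv C F B) :=
    disjoint_closure_upperInv_compl_upperInv hC hne husc hbdr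
  have hA₁A₂ : ∀ x ∈ A₁, x ∉ A₂ → x ∈ upperInv C F B := fun x h₁ h₂ =>
    mem_upperInv_upperInv_compl hC hconn husc hbdr h₁ h₂
  have hPne : (upperInv C F B).Nonempty := by
    obtain ⟨z, hz⟩ := lowerInv_nonempty hCconn.nonempty hC hne hbdr
    by_cases hzA₂ : z ∈ A₂
    · obtain ⟨y, hyF, hyA₁⟩ := hzA₂.2
      exact ⟨y, hA₁A₂ y hyA₁ (hA₃ z hz.1 y hyF)⟩
    · exact ⟨z, hA₁A₂ z hz hzA₂⟩
  have hQne : (upperInv C F (closure B)ᶜ).Nonempty := by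
    obtain ⟨p, hp⟩ := hPne
    obtain ⟨b, hb⟩ := hne p hp.1
    exact ⟨b, upperInv_mono (compl_subset_compl.2 hclB) (hp.2 hb)⟩
  have hBclB : Disjoint B (closure B)ᶜ := disjoint_compl_right.mono_left subset_closure
  refine hCconn.isPreconnected.not_subset_upperInv_union hne husc hBopen
    isClosed_closure.isOpen_compl hBclB hPne hQne fun x hx => ?_
  -- a point of `F x` in `closure B \ B` would lie in `A₁ \ A₂`, hence be mapped into `B`
  have hsplit : F x ⊆ B ∪ (closure B)ᶜ := fun y hy => by
    by_cases hyB : y ∈ B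
    · exact Or.inl hyB
    refine Or.inr fun hycl => disjoint_left.1 hP hycl (hA₁A₂ y ?_ (hA₃ x hx y hy))
    by_contra hyA₁
    exact hyB ((mem_upperInv_compl_iff (hclB hycl)).2 hyA₁)
  exact ((hconn x hx).subset_or_subset hBopen isClosed_closure.isOpen_compl hBclB hsplit).imp
    (⟨hx, ·⟩) (⟨hx, ·⟩)

end

theorem dvt_corr_chain_four
    {X : Type*} [TopologicalSpace X] [ConnectedSpace X]
    (C : Set X) (hCconn : IsConnected C)
    (hC : IsClosed C) (F : X → Set X)
    (hne : ∀ x ∈ C, (F x).Nonempty)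
    (hconn : ∀ x ∈ C, IsPreconnected (F x))
    (husc : ∀ U : Set X, IsOpen U → IsOpen {x : C | F (x : X) ⊆ U})
    (hbdr : ∀ x ∈ frontier C, (F x ∩ C).Nonempty) :
    ∃ x₀ x₁ x₂ x₃ x₄, x₀ ∈ C ∧ x₁ ∈ F x₀ ∧ x₁ ∈ C ∧ x₂ ∈ F x₁ ∧ x₂ ∈ C ∧
      x₃ ∈ F x₂ ∧ x₃ ∈ C ∧ x₄ ∈ F x₃ := by
  obtain ⟨x₀, hx₀, x₁, hx₁, hx₁A⟩ :=
    lowerInv_lowerInv_lowerInv_nonempty hCconn hC hne hconn husc hbdr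
  obtain ⟨x₂, hx₂, hx₂A⟩ := hx₁A.2
  obtain ⟨x₃, hx₃, hx₃C⟩ := hx₂A.2
  obtain ⟨x₄, hx₄⟩ := hne x₃ hx₃C
  exact ⟨x₀, x₁, x₂, x₃, x₄, hx₀, hx₁, hx₁A.1, hx₂, hx₂A.1, hx₃, hx₃C, hx₄⟩
end

section
/- Let X be the unit circle S¹, let C be the closed arc of angles [2π/5, 8π/5] (three fifths of the circle), and let f : C → X be the rotation by angle 4π/5. Then f is continuous, f maps ∂C into C, and the maximal length of an orbit (a sequence x_0,...,x_n with x_i = f(x_{i-1}) and x_{i-1} ∈ C) equals 4. -/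
/-!
The iterates of `rot` move an angle `θ` by multiples of `4π/5`, i.e. modulo `2π` through the five
equally spaced angles `θ + 2πj/5`. The gap `(8π/5, 12π/5)` left by `C` has length `4π/5 > 2π/5`, so
it contains one of the first five iterates of any point of `C`; the orbit
`4π/5, 8π/5, 2π/5, 6π/5` shows that four iterates can stay in `C`. The frontier of `C` consists of
its two endpoints, which `rot` sends to `6π/5` and `2π/5`.
-/

open Real

/-- The arc of the circle consisting of angles in `[2π/5, 8π/5]`. -/
noncomputable def arcC : Set Circle :=
  {z : Circle | ∃ θ ∈ Set.Icc (2 * π / 5) (8 * π / 5), z = Circle.exp θ}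

/-- The rotation of the circle by the angle `4π/5`. -/
noncomputable def rot (z : Circle) : Circle := Circle.exp (4 * π / 5) * z

open Set Function

namespace Circle

lemma exp_notMem_image_Icc {a b ψ : ℝ} (hb : b < ψ) (ha : ψ < a + 2 * π) :
    exp ψ ∉ exp '' Icc a b := by
  rintro ⟨φ, ⟨haφ, hφb⟩, h⟩
  obtain ⟨m, hm⟩ := exp_eq_exp.mp h
  have hπ := pi_pos
  have hneg : (m : ℝ) < 0 := by nlinarith
  have hgt : (-1 : ℝ) < m := by nlinarith
  have : m < 0 ∧ -1 < m := ⟨by exact_mod_cast hneg, by exact_mod_cast hgt⟩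
  omega

lemma frontier_exp_image_Icc_subset (a b : ℝ) :
    frontier (exp '' Icc a b) ⊆ {exp a, exp b} := by
  have hclosed : IsClosed (exp '' Icc a b) := (isCompact_Icc.image exp.continuous).isClosed
  have hinterior : exp '' Ioo a b ⊆ interior (exp '' Icc a b) :=
    interior_maximal (image_mono Ioo_subset_Icc_self)
      (isLocalHomeomorph_circleExp.isOpenMap _ isOpen_Ioo)
  rintro _ ⟨hz, hz'⟩
  rw [hclosed.closure_eq] at hz
  obtain ⟨θ, ⟨haθ, hθb⟩, rfl⟩ := hz
  have hθ : θ ∉ Ioo a b := fun h => hz' (hinterior ⟨θ, h, rfl⟩)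
  rcases haθ.eq_or_lt with rfl | haθ
  · exact Or.inl rfl
  · exact Or.inr (congrArg exp (hθb.eq_of_not_lt fun hθb' => hθ ⟨haθ, hθb'⟩))

end Circle

lemma arcC_eq_image : arcC = Circle.exp '' Icc (2 * π / 5) (8 * π / 5) := by
  ext z
  exact exists_congr fun θ => and_congr_right fun _ => eq_comm

lemma rot_iterate_exp (n : ℕ) (θ : ℝ) :
    rot^[n] (Circle.exp θ) = Circle.exp (θ + n * (4 * π / 5)) := by
  change (Circle.exp (4 * π / 5) * ·)^[n] _ = _
  rw [mul_left_iterate]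
  dsimp only
  rw [← Circle.exp_natCast_mul, ← Circle.exp_add, add_comm]

lemma rot_iterate_exp_mem_arcC {n : ℕ} {θ : ℝ} (m : ℤ)
    (h : θ + n * (4 * π / 5) - m * (2 * π) ∈ Icc (2 * π / 5) (8 * π / 5)) :
    rot^[n] (Circle.exp θ) ∈ arcC := by
  rw [rot_iterate_exp, ← Circle.periodic_exp.sub_int_mul_eq m, arcC_eq_image]
  exact mem_image_of_mem _ h

lemma rot_iterate_exp_notMem_arcC {n : ℕ} {θ : ℝ} (m : ℤ)
    (h₁ : 8 * π / 5 < θ + n * (4 * π / 5) - m * (2 * π))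
    (h₂ : θ + n * (4 * π / 5) - m * (2 * π) < 12 * π / 5) :
    rot^[n] (Circle.exp θ) ∉ arcC := by
  rw [rot_iterate_exp, ← Circle.periodic_exp.sub_int_mul_eq m, arcC_eq_image]
  exact Circle.exp_notMem_image_Icc h₁ (by linarith)

theorem circle_example_iter_eq_four :
    Continuous rot ∧
    (∀ z ∈ frontier arcC, rot z ∈ arcC) ∧
    (∃ x₀ : Circle, ∀ i < 4, rot^[i] x₀ ∈ arcC) ∧
    ¬ (∃ x₀ : Circle, ∀ i < 5, rot^[i] x₀ ∈ arcC) := by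
  have hπ := pi_pos
  refine ⟨continuous_const.mul continuous_id, ?_, ?_, ?_⟩
  · intro z hz
    rw [arcC_eq_image] at hz
    rcases Circle.frontier_exp_image_Icc_subset _ _ hz with rfl | rfl
    · exact rot_iterate_exp_mem_arcC (n := 1) 0 (by constructor <;> push_cast <;> linarith)
    · exact rot_iterate_exp_mem_arcC (n := 1) 1 (by constructor <;> push_cast <;> linarith)
  · refine ⟨Circle.exp (4 * π / 5), fun i hi => ?_⟩
    interval_cases i
    · exact rot_iterate_exp_mem_arcC 0 (by constructor <;> push_cast <;> linarith)
    · exact rot_iterate_exp_mem_arcC 0 (by constructor <;> push_cast <;> linarith)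
    · exact rot_iterate_exp_mem_arcC 1 (by constructor <;> push_cast <;> linarith)
    · exact rot_iterate_exp_mem_arcC 1 (by constructor <;> push_cast <;> linarith)
  · rintro ⟨_, h⟩
    obtain ⟨θ, ⟨hθ₁, hθ₂⟩, rfl⟩ := h 0 (by norm_num)
    rcases lt_or_ge θ (4 * π / 5) with hθ | hθ₃
    · exact rot_iterate_exp_notMem_arcC (n := 2) 0 (by push_cast; linarith)
        (by push_cast; linarith) (h 2 (by norm_num))
    rcases lt_or_ge θ (6 * π / 5) with hθ | hθ₄
    · exact rot_iterate_exp_notMem_arcC (n := 4) 1 (by push_cast; linarith)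
        (by push_cast; linarith) (h 4 (by norm_num))
    rcases lt_or_ge θ (8 * π / 5) with hθ | hθ₅
    · exact rot_iterate_exp_notMem_arcC (n := 1) 0 (by push_cast; linarith)
        (by push_cast; linarith) (h 1 (by norm_num))
    · exact rot_iterate_exp_notMem_arcC (n := 3) 1 (by push_cast; linarith)
        (by push_cast; linarith) (h 3 (by norm_num))
end
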